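/- arXiv:1909.04722 — 2 statements merged into one kernel-verified Lean document; each statement's English description precedes it below -/
import Mathlib

section
/- Under the same hypotheses (κ̲ ≤ κᵢ ≤ κ̄, |bᵢ| ≤ b̄, |Qᵢ| ≤ Q̄), the bilinear form b satisfies the Gårding inequality: b((u₁,u₂),(u₁,u₂)) + K(‖u₁‖²_{L²(Ω)} + ‖u₂‖²_{L²(Ω)}) ≥ α ‖(u₁,u₂)‖_a², where K = b̄/√κ̲ + 2Q̄ and α = 1 − b̄/√κ̲, provided b̄ < √κ̲ so that α > 0. -/
open MeasureTheory Real
open scoped InnerProductSpace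

/-! Pointwise, Cauchy–Schwarz and Young's inequality `β a |v| ≤ (β/√κ) (κ a² + v²) / 2` bound the
advection terms below by `-(b̄/√κ̲)(κ₁|∇u₁|² + κ₂|∇u₂|² + u₁² + u₂²)`, and the reaction terms,
which factor as `(u₁ - u₂)(Q₁u₁ - Q₂u₂)`, by `-2Q̄(u₁² + u₂²)`. Integrating both bounds gives the
inequality. -/

section

variable {E : Type*} [NormedAddCommGroup E] [InnerProductSpace ℝ E]

lemma abs_inner_sub_mul_le {b g h : E} {u β : ℝ} (hb : ‖b‖ ≤ β) :
    |⟪b, g - h⟫_ℝ * u| ≤ β * (‖g‖ + ‖h‖) * |u| := by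
  rw [abs_mul]
  gcongr
  calc |⟪b, g - h⟫_ℝ| ≤ ‖b‖ * ‖g - h‖ := abs_real_inner_le_norm _ _
    _ ≤ β * (‖g‖ + ‖h‖) := by
      gcongr
      · exact (norm_nonneg b).trans hb
      · exact norm_sub_le g h

lemma mul_mul_le_div_sqrt_mul_add_sq {β κ k a v : ℝ} (hβ : 0 ≤ β) (hκ : 0 < κ) (hk : κ ≤ k) :
    β * a * v ≤ β / √κ * (k * a ^ 2 + v ^ 2) / 2 := by
  have hs : 0 < √κ := sqrt_pos.mpr hκ
  have hyoung : 2 * (√κ * a) * v ≤ (√κ * a) ^ 2 + v ^ 2 := two_mul_le_add_sq _ _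
  have hka : (√κ * a) ^ 2 ≤ k * a ^ 2 := by
    rw [mul_pow, sq_sqrt hκ.le]
    gcongr
  have hc : 0 ≤ β / √κ := div_nonneg hβ hs.le
  calc β * a * v = β / √κ * (2 * (√κ * a) * v) / 2 := by field_simp
    _ ≤ β / √κ * (k * a ^ 2 + v ^ 2) / 2 := by gcongr; linarith

lemma neg_div_sqrt_mul_le_inner_sub_mul_add {b₁ b₂ g₁ g₂ : E} {u₁ u₂ k₁ k₂ κ β : ℝ}
    (hb₁ : ‖b₁‖ ≤ β) (hb₂ : ‖b₂‖ ≤ β) (hκ : 0 < κ) (hk₁ : κ ≤ k₁) (hk₂ : κ ≤ k₂) :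
    -(β / √κ) * (k₁ * ‖g₁‖ ^ 2 + k₂ * ‖g₂‖ ^ 2 + u₁ ^ 2 + u₂ ^ 2)
      ≤ ⟪b₁, g₁ - g₂⟫_ℝ * u₁ + ⟪b₂, g₂ - g₁⟫_ℝ * u₂ := by
  have hβ : 0 ≤ β := (norm_nonneg b₁).trans hb₁
  have h₁ := (abs_le.mp (abs_inner_sub_mul_le (g := g₁) (h := g₂) (u := u₁) hb₁)).1
  have h₂ := (abs_le.mp (abs_inner_sub_mul_le (g := g₂) (h := g₁) (u := u₂) hb₂)).1
  have young {k : ℝ} (hk : κ ≤ k) (g : E) (v : ℝ) :=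
    mul_mul_le_div_sqrt_mul_add_sq (a := ‖g‖) (v := |v|) hβ hκ hk
  have := young hk₁ g₁ u₁
  have := young hk₂ g₂ u₁
  have := young hk₂ g₂ u₂
  have := young hk₁ g₁ u₂
  simp only [sq_abs] at *
  linarith

end

lemma neg_two_mul_le_reaction {Q₁ Q₂ Q u₁ u₂ : ℝ} (hQ₁ : |Q₁| ≤ Q) (hQ₂ : |Q₂| ≤ Q) :
    -(2 * Q) * (u₁ ^ 2 + u₂ ^ 2) ≤ Q₁ * (u₁ - u₂) * u₁ + Q₂ * (u₂ - u₁) * u₂ := by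
  have hfactor : Q₁ * (u₁ - u₂) * u₁ + Q₂ * (u₂ - u₁) * u₂ = (u₁ - u₂) * (Q₁ * u₁ - Q₂ * u₂) := by
    ring
  have hQ : 0 ≤ Q := (abs_nonneg Q₁).trans hQ₁
  have hbound : |(u₁ - u₂) * (Q₁ * u₁ - Q₂ * u₂)| ≤ Q * (|u₁| + |u₂|) ^ 2 := by
    calc |(u₁ - u₂) * (Q₁ * u₁ - Q₂ * u₂)| ≤ (|u₁| + |u₂|) * (Q * |u₁| + Q * |u₂|) := by
          rw [abs_mul]
          gcongr
          · exact abs_sub _ _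
          · refine (abs_sub _ _).trans (add_le_add ?_ ?_) <;> rw [abs_mul] <;> gcongr
      _ = Q * (|u₁| + |u₂|) ^ 2 := by ring
  have hsq : (|u₁| + |u₂|) ^ 2 ≤ 2 * (u₁ ^ 2 + u₂ ^ 2) := by
    nlinarith [sq_abs u₁, sq_abs u₂, sq_nonneg (|u₁| - |u₂|)]
  rw [hfactor]
  linarith [(abs_le.mp hbound).1, mul_le_mul_of_nonneg_left hsq hQ]

lemma integral_le_integral_add_of_le {Ω : Type*} [MeasurableSpace Ω] {μ : Measure Ω}
    {f₁ f₂ g : Ω → ℝ} (hg : Integrable g μ) (hf₁ : Integrable f₁ μ) (hf₂ : Integrable f₂ μ)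
    (h : ∀ x, g x ≤ f₁ x + f₂ x) : ∫ x, g x ∂μ ≤ (∫ x, f₁ x ∂μ) + ∫ x, f₂ x ∂μ := by
  rw [← integral_add hf₁ hf₂]
  exact integral_mono hg (hf₁.add hf₂) h

theorem garding_inequality_of_dual_continuum_bilinear_form_general
    {Ω : Type*} [MeasureSpace Ω]
    (κ₁ κ₂ Q₁ Q₂ : Ω → ℝ)
    (b₁ b₂ : Ω → EuclideanSpace ℝ (Fin 2))
    (u₁ u₂ : Ω → ℝ)
    (gu₁ gu₂ : Ω → EuclideanSpace ℝ (Fin 2))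
    (κlow κhigh bbar Qbar : ℝ)
    (hκlow : 0 < κlow)
    (hκ₁ : ∀ x, κlow ≤ κ₁ x ∧ κ₁ x ≤ κhigh)
    (hκ₂ : ∀ x, κlow ≤ κ₂ x ∧ κ₂ x ≤ κhigh)
    (hb₁ : ∀ x, ‖b₁ x‖ ≤ bbar) (hb₂ : ∀ x, ‖b₂ x‖ ≤ bbar)
    (hQ₁ : ∀ x, |Q₁ x| ≤ Qbar) (hQ₂ : ∀ x, |Q₂ x| ≤ Qbar)
    -- integrability of the relevant quantities
    (hIu₁ : Integrable (fun x => κ₁ x * ‖gu₁ x‖ ^ 2))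
    (hIu₂ : Integrable (fun x => κ₂ x * ‖gu₂ x‖ ^ 2))
    (hL₁ : Integrable (fun x => (u₁ x) ^ 2))
    (hL₂ : Integrable (fun x => (u₂ x) ^ 2))
    (hI3 : Integrable (fun x => (inner ℝ (b₁ x) (gu₁ x - gu₂ x) : ℝ) * u₁ x))
    (hI4 : Integrable (fun x => (inner ℝ (b₂ x) (gu₂ x - gu₁ x) : ℝ) * u₂ x))
    (hI5 : Integrable (fun x => Q₁ x * (u₁ x - u₂ x) * u₁ x))
    (hI6 : Integrable (fun x => Q₂ x * (u₂ x - u₁ x) * u₂ x)) :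
    (∫ x, κ₁ x * ‖gu₁ x‖ ^ 2) + (∫ x, κ₂ x * ‖gu₂ x‖ ^ 2)
      + (∫ x, (inner ℝ (b₁ x) (gu₁ x - gu₂ x) : ℝ) * u₁ x)
      + (∫ x, (inner ℝ (b₂ x) (gu₂ x - gu₁ x) : ℝ) * u₂ x)
      + (∫ x, Q₁ x * (u₁ x - u₂ x) * u₁ x)
      + (∫ x, Q₂ x * (u₂ x - u₁ x) * u₂ x)
      + (bbar / Real.sqrt κlow + 2 * Qbar) * ((∫ x, (u₁ x) ^ 2) + ∫ x, (u₂ x) ^ 2)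
    ≥ (1 - bbar / Real.sqrt κlow) *
        ((∫ x, κ₁ x * ‖gu₁ x‖ ^ 2) + ∫ x, κ₂ x * ‖gu₂ x‖ ^ 2) := by
  have hadvection := integral_le_integral_add_of_le (by fun_prop) hI3 hI4 fun x =>
    neg_div_sqrt_mul_le_inner_sub_mul_add (hb₁ x) (hb₂ x) hκlow (hκ₁ x).1 (hκ₂ x).1
  have hreaction := integral_le_integral_add_of_le (by fun_prop) hI5 hI6 fun x =>
    neg_two_mul_le_reaction (hQ₁ x) (hQ₂ x)
  rw [integral_const_mul, integral_add (by fun_prop) hL₂, integral_add (by fun_prop) hL₁,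
    integral_add hIu₁ hIu₂] at hadvection
  rw [integral_const_mul, integral_add hL₁ hL₂] at hreaction
  linarith

/-- Gårding inequality for the dual-continuum bilinear form `b`:
`b(u,u) + K ‖u‖²_{L²} ≥ α ‖u‖_a²`, with `K = b̄/√κ̲ + 2Q̄`, `α = 1 − b̄/√κ̲ > 0`. -/
theorem garding_inequality_of_dual_continuum_bilinear_form
    {Ω : Type*} [MeasureSpace Ω]
    (κ₁ κ₂ Q₁ Q₂ : Ω → ℝ)
    (b₁ b₂ : Ω → EuclideanSpace ℝ (Fin 2))
    (u₁ u₂ : Ω → ℝ)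
    (gu₁ gu₂ : Ω → EuclideanSpace ℝ (Fin 2))
    (κlow κhigh bbar Qbar : ℝ)
    (hκlow : 0 < κlow)
    (hκ₁ : ∀ x, κlow ≤ κ₁ x ∧ κ₁ x ≤ κhigh)
    (hκ₂ : ∀ x, κlow ≤ κ₂ x ∧ κ₂ x ≤ κhigh)
    (hb₁ : ∀ x, ‖b₁ x‖ ≤ bbar) (hb₂ : ∀ x, ‖b₂ x‖ ≤ bbar)
    (hQ₁ : ∀ x, |Q₁ x| ≤ Qbar) (hQ₂ : ∀ x, |Q₂ x| ≤ Qbar)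
    (hα : bbar < Real.sqrt κlow)
    -- integrability of the relevant quantities
    (hIu₁ : Integrable (fun x => κ₁ x * ‖gu₁ x‖ ^ 2))
    (hIu₂ : Integrable (fun x => κ₂ x * ‖gu₂ x‖ ^ 2))
    (hL₁ : Integrable (fun x => (u₁ x) ^ 2))
    (hL₂ : Integrable (fun x => (u₂ x) ^ 2))
    (hI3 : Integrable (fun x => (inner ℝ (b₁ x) (gu₁ x - gu₂ x) : ℝ) * u₁ x))
    (hI4 : Integrable (fun x => (inner ℝ (b₂ x) (gu₂ x - gu₁ x) : ℝ) * u₂ x))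
    (hI5 : Integrable (fun x => Q₁ x * (u₁ x - u₂ x) * u₁ x))
    (hI6 : Integrable (fun x => Q₂ x * (u₂ x - u₁ x) * u₂ x)) :
    (∫ x, κ₁ x * ‖gu₁ x‖ ^ 2) + (∫ x, κ₂ x * ‖gu₂ x‖ ^ 2)
      + (∫ x, (inner ℝ (b₁ x) (gu₁ x - gu₂ x) : ℝ) * u₁ x)
      + (∫ x, (inner ℝ (b₂ x) (gu₂ x - gu₁ x) : ℝ) * u₂ x)
      + (∫ x, Q₁ x * (u₁ x - u₂ x) * u₁ x)
      + (∫ x, Q₂ x * (u₂ x - u₁ x) * u₂ x)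
      + (bbar / Real.sqrt κlow + 2 * Qbar) * ((∫ x, (u₁ x) ^ 2) + ∫ x, (u₂ x) ^ 2)
    ≥ (1 - bbar / Real.sqrt κlow) *
        ((∫ x, κ₁ x * ‖gu₁ x‖ ^ 2) + ∫ x, κ₂ x * ‖gu₂ x‖ ^ 2) :=
  garding_inequality_of_dual_continuum_bilinear_form_general κ₁ κ₂ Q₁ Q₂ b₁ b₂ u₁ u₂ gu₁ gu₂ κlow
    κhigh bbar Qbar hκlow hκ₁ hκ₂ hb₁ hb₂ hQ₁ hQ₂ hIu₁ hIu₂ hL₁ hL₂ hI3 hI4 hI5 hI6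
end

section
/- (Céa-type lemma with Gårding inequality and duality argument.) Let V_h ⊂ H = (H₀¹(Ω))² be a finite-dimensional subspace. Assume: (i) b is bounded, b(u,v) ≤ C_b‖u‖_a‖v‖_a; (ii) Gårding: b(u,u) + K‖u‖²_{L²} ≥ α‖u‖_a²; (iii) Galerkin orthogonality b(u − u_h, v) = 0 for all v ∈ V_h; (iv) for the adjoint problem b(v, w) = ⟨u − u_h, v⟩_{L²} for all v ∈ H, the solution w satisfies an approximation bound inf_{w_h ∈ V_h}‖w − w_h‖_a ≤ C_A C_R h ‖u − u_h‖_{L²}. Then ‖u − u_h‖_{L²(Ω)} ≤ C_b C_A C_R h ‖u − u_h‖_a, and for all h ≤ h₀ = √α/(√(2K) C_b C_A C_R), one has ‖u − u_h‖_a ≤ (2C_b/α) inf_{v ∈ V_h} ‖u − v‖_a. -/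
/-- Céa-type lemma with Gårding inequality and duality argument.
`H` models `(H₀¹(Ω))²` with energy norm `na = ‖·‖_a` and `L²` norm
`nL = ‖·‖_{L²}` (coming from the `L²` inner product `ip`); `Vh` is a
finite-dimensional subspace, `u` the exact and `u_h` the Galerkin solution, and
`w` solves the adjoint problem with right-hand side `u − u_h`. -/
theorem cea_garding_duality
    {H : Type*} [NormedAddCommGroup H] [Module ℝ H]
    (b : H →ₗ[ℝ] H →ₗ[ℝ] ℝ) (ip : H →ₗ[ℝ] H →ₗ[ℝ] ℝ)
    (na nL : H → ℝ)
    (Vh : Submodule ℝ H) (hVh : FiniteDimensional ℝ Vh)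
    (u u_h w : H)
    (C_b K α C_A C_R h : ℝ)
    (hC_b : 0 < C_b) (hK : 0 < K) (hα : 0 < α) (hC_A : 0 < C_A)
    (hC_R : 0 < C_R) (hh : 0 < h)
    (hna_nonneg : ∀ z, 0 ≤ na z)
    (hnL : ∀ z, (nL z) ^ 2 = ip z z) (hnL_nonneg : ∀ z, 0 ≤ nL z)
    -- (i) boundedness of b in the energy norm
    (hbdd : ∀ x y : H, b x y ≤ C_b * na x * na y)
    -- (ii) Gårding inequality
    (hGarding : ∀ x : H, b x x + K * (nL x) ^ 2 ≥ α * (na x) ^ 2)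
    -- (iii) Galerkin orthogonality
    (hGal : ∀ v ∈ Vh, b (u - u_h) v = 0)
    -- (iv) the adjoint solution w, b(v,w) = ⟨u − u_h, v⟩_{L²} for all v,
    -- with the approximation bound
    (hadj : ∀ v : H, b v w = ip (u - u_h) v)
    (happrox : sInf ((fun wh : H => na (w - wh)) '' (Vh : Set H))
      ≤ C_A * C_R * h * nL (u - u_h))
    (hu_h : u_h ∈ Vh) :
    nL (u - u_h) ≤ C_b * C_A * C_R * h * na (u - u_h) ∧
      (h ≤ Real.sqrt α / (Real.sqrt (2 * K) * C_b * C_A * C_R) →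
        ∀ v ∈ Vh, na (u - u_h) ≤ (2 * C_b / α) * na (u - v)) := by

  have key : ∀ wh ∈ Vh, nL (u - u_h) ^ 2 ≤ C_b * na (u - u_h) * na (w - wh) := by
    intro wh hwh
    have h1 : nL (u - u_h) ^ 2 = b (u - u_h) (w - wh) := by
      rw [hnL (u - u_h), ← hadj (u - u_h), map_sub (b (u - u_h)) w wh, hGal wh hwh, sub_zero]
    rw [h1]; exact hbdd _ _
  have part1 : nL (u - u_h) ≤ C_b * C_A * C_R * h * na (u - u_h) := by
    rcases eq_or_lt_of_le (hnL_nonneg (u - u_h)) with h0 | h0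
    · rw [← h0]; exact mul_nonneg (by positivity) (hna_nonneg _)
    · rcases eq_or_lt_of_le (hna_nonneg (u - u_h)) with ha0 | ha0
      · exfalso
        have := key u_h hu_h
        rw [← ha0] at this
        nlinarith
      · have hCna : 0 < C_b * na (u - u_h) := by positivity
        have hlb : nL (u - u_h) ^ 2 / (C_b * na (u - u_h)) ≤
            sInf ((fun wh : H => na (w - wh)) '' (Vh : Set H)) := by
          refine le_csInf ⟨na (w - u_h), ⟨u_h, hu_h, rfl⟩⟩ ?_
          rintro x ⟨wh, hwh, rfl⟩
          rw [div_le_iff₀ hCna]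
          have := key wh hwh
          nlinarith
        rw [div_le_iff₀ hCna] at hlb
        have h3 := mul_le_mul_of_nonneg_left happrox hCna.le
        nlinarith
  refine ⟨part1, fun hh0 v hv => ?_⟩
  have h4 : b (u - u_h) (v - u_h) = 0 := hGal _ (Submodule.sub_mem _ hv hu_h)
  have h5 : b (u - u_h) (u - u_h) = b (u - u_h) (u - v) := by
    have h6 : b (u - u_h) (u - u_h) - b (u - u_h) (u - v) = b (u - u_h) (v - u_h) := by
      rw [← map_sub (b (u - u_h))]; congr 1; abel
    linarith [h4, h6]
  have hs2K : (0:ℝ) < Real.sqrt (2 * K) := Real.sqrt_pos.2 (by linarith)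
  have h2 : C_b * C_A * C_R * h ≤ Real.sqrt α / Real.sqrt (2 * K) := by
    have := mul_le_mul_of_nonneg_left hh0 (by positivity : (0:ℝ) ≤ C_b * C_A * C_R)
    calc C_b * C_A * C_R * h
        ≤ C_b * C_A * C_R * (Real.sqrt α / (Real.sqrt (2 * K) * C_b * C_A * C_R)) := this
      _ = Real.sqrt α / Real.sqrt (2 * K) := by field_simp
  have h3 : (C_b * C_A * C_R * h) ^ 2 ≤ α / (2 * K) := by
    have := pow_le_pow_left₀ (by positivity : (0:ℝ) ≤ C_b * C_A * C_R * h) h2 2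
    rwa [div_pow, Real.sq_sqrt hα.le, Real.sq_sqrt (by linarith : (0:ℝ) ≤ 2 * K)] at this
  have hsq : (C_b * C_A * C_R * h) ^ 2 * (2 * K) ≤ α := by
    rwa [le_div_iff₀ (by linarith : (0:ℝ) < 2 * K)] at h3
  have hG := hGarding (u - u_h)
  have hb2 : b (u - u_h) (u - v) ≤ C_b * na (u - u_h) * na (u - v) := hbdd _ _
  have hnL2 : nL (u - u_h) ^ 2 ≤ (C_b * C_A * C_R * h) ^ 2 * na (u - u_h) ^ 2 := by
    nlinarith [hnL_nonneg (u - u_h), hna_nonneg (u - u_h)]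
  have hK2 : K * nL (u - u_h) ^ 2 ≤ K * ((C_b * C_A * C_R * h) ^ 2 * na (u - u_h) ^ 2) :=
    mul_le_mul_of_nonneg_left hnL2 hK.le
  have hsq2 : (C_b * C_A * C_R * h) ^ 2 * (2 * K) * na (u - u_h) ^ 2 ≤ α * na (u - u_h) ^ 2 :=
    mul_le_mul_of_nonneg_right hsq (sq_nonneg _)
  have hfin : α / 2 * na (u - u_h) ^ 2 ≤ C_b * na (u - u_h) * na (u - v) := by
    nlinarith [hG, hb2, h5, hK2, hsq2]
  rcases eq_or_lt_of_le (hna_nonneg (u - u_h)) with ha0 | ha0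
  · rw [← ha0]; exact mul_nonneg (by positivity) (hna_nonneg _)
  · rw [div_mul_eq_mul_div, le_div_iff₀ hα]
    nlinarith [hfin, ha0]
end
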